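/- In a bipartite graph G with parts A and B, with no isolated vertices, satisfying γ_t(G) = n − Δ(G) + 1, let x ∈ A have degree Δ(G). Then every vertex y ∈ A \ {x} satisfies N(y) ⊄ N(x) (i.e., N(y) − N(x) ≠ ∅). -/

import Mathlib

/-- A total dominating set: every vertex has a neighbor in `S`. -/
def SimpleGraph.TotalDominatingSet {V : Type*} (G : SimpleGraph V) (S : Set V) : Prop :=
  ∀ v : V, ∃ u ∈ S, G.Adj v u

/-- The total domination number: minimum cardinality of a total dominating set. -/
noncomputable def SimpleGraph.totalDominationNumber {V : Type*} (G : SimpleGraph V) : ℕ :=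
  sInf {k | ∃ S : Set V, G.TotalDominatingSet S ∧ S.ncard = k}

/-! Suppose `N(y) ⊆ N(x)` for some `y ≠ x`, and let `Y` be the set of all such `y` (removing
only `y` would leave the other members of `Y` undominated). Fix a neighbour `f v` of every
vertex `v`. Then `(V ∖ (N(x) ∪ Y)) ∪ f(Y)` is a total dominating set: `x` dominates `N(x)`,
`f y ∈ N(x)` dominates `x`, `f v` dominates `v ∈ Y`, and any other vertex has a neighbour outside
`N(x) ∪ Y`. A bipartite graph is triangle-free, so without isolated vertices `Y` misses `N(x)`,
and the set has at most `n - deg x = n - Δ` elements, contradicting `γ_t = n - Δ + 1`. -/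

theorem Set.ncard_compl_union_image_le {α : Type*} [Finite α] {s t : Set α} (hst : Disjoint s t)
    (f : α → α) : ((s ∪ t)ᶜ ∪ f '' t).ncard ≤ Nat.card α - s.ncard := by
  have hcompl := Set.ncard_compl_add_ncard (s ∪ t)
  have hunion := Set.ncard_union_eq hst
  have himage := Set.ncard_image_le (f := f) (s := t)
  have := Set.ncard_union_le (s ∪ t)ᶜ (f '' t)
  omega

namespace SimpleGraph

variable {V : Type*} {G : SimpleGraph V}

theorem totalDominationNumber_le_ncard {S : Set V} (hS : G.TotalDominatingSet S) :
    G.totalDominationNumber ≤ S.ncard :=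
  Nat.sInf_le ⟨S, hS, rfl⟩

theorem not_neighborSet_subset_of_adj (hG : G.CliqueFree 3) {x v w : V} (hxv : G.Adj x v)
    (hvw : G.Adj v w) : ¬G.neighborSet v ⊆ G.neighborSet x := fun h ↦
  isIndepSet_neighborSet_of_triangleFree G hG x hxv (h hvw) hvw.ne hvw

def neighborSetDominated (G : SimpleGraph V) (x : V) : Set V :=
  {v | v ≠ x ∧ G.neighborSet v ⊆ G.neighborSet x}

theorem disjoint_neighborSet_neighborSetDominated (hG : G.CliqueFree 3)
    (hiso : ∀ v, ∃ u, G.Adj v u) (x : V) :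
    Disjoint (G.neighborSet x) (G.neighborSetDominated x) := by
  refine Set.disjoint_left.mpr fun v hxv hv ↦ ?_
  obtain ⟨w, hvw⟩ := hiso v
  exact not_neighborSet_subset_of_adj hG hxv hvw hv.2

theorem totalDominatingSet_compl_union_image {x y : V} (hy : y ∈ G.neighborSetDominated x)
    {f : V → V} (hf : ∀ v, G.Adj v (f v)) :
    G.TotalDominatingSet
      ((G.neighborSet x ∪ G.neighborSetDominated x)ᶜ ∪ f '' G.neighborSetDominated x) := by
  intro v
  by_cases hvY : v ∈ G.neighborSetDominated x
  · exact ⟨f v, Or.inr ⟨v, hvY, rfl⟩, hf v⟩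
  by_cases hvx : v = x
  · subst hvx
    exact ⟨f y, Or.inr ⟨y, hy, rfl⟩, hy.2 (hf y)⟩
  by_cases hxv : G.Adj x v
  · refine ⟨x, Or.inl ?_, hxv.symm⟩
    simp [neighborSetDominated]
  obtain ⟨w, hvw, hxw⟩ : ∃ w, G.Adj v w ∧ ¬G.Adj x w := by
    simpa [neighborSetDominated, hvx, Set.subset_def] using hvY
  refine ⟨w, Or.inl ?_, hvw⟩
  -- a dominated `w` would put its neighbour `v` into `N(x)`
  simp only [Set.mem_compl_iff, Set.mem_union, mem_neighborSet, not_or]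
  exact ⟨hxw, fun hw ↦ hxv (hw.2 hvw.symm)⟩

theorem totalDominationNumber_le_card_sub_degree [Fintype V] [DecidableRel G.Adj]
    (hG : G.CliqueFree 3) (hiso : ∀ v, ∃ u, G.Adj v u) {x y : V} (hyx : y ≠ x)
    (hy : G.neighborSet y ⊆ G.neighborSet x) :
    G.totalDominationNumber ≤ Fintype.card V - G.degree x := by
  obtain ⟨f, hf⟩ := Classical.skolem.mp hiso
  calc G.totalDominationNumber
      ≤ ((G.neighborSet x ∪ G.neighborSetDominated x)ᶜ ∪ f '' G.neighborSetDominated x).ncard :=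
        totalDominationNumber_le_ncard (totalDominatingSet_compl_union_image ⟨hyx, hy⟩ hf)
    _ ≤ Nat.card V - (G.neighborSet x).ncard :=
        Set.ncard_compl_union_image_le (disjoint_neighborSet_neighborSetDominated hG hiso x) f
    _ = Fintype.card V - G.degree x := by
        rw [Nat.card_eq_fintype_card, Set.ncard_eq_toFinset_card', ← card_neighborFinset_eq_degree]
        rfl

end SimpleGraph

theorem bipartite_extremal_neighborhood_not_subset_general
    {V : Type*} [Fintype V] (G : SimpleGraph V) [DecidableRel G.Adj]
    (A B : Set V) (hdisj : A ∩ B = ∅)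
    (hbip : ∀ u v : V, G.Adj u v → (u ∈ A ∧ v ∈ B) ∨ (u ∈ B ∧ v ∈ A))
    (hiso : ∀ v : V, ∃ u : V, G.Adj v u)
    (hγ : G.totalDominationNumber = Fintype.card V - G.maxDegree + 1)
    (x : V) (hdeg : G.degree x = G.maxDegree) :
    ∀ y ∈ A \ {x}, (G.neighborSet y \ G.neighborSet x).Nonempty := by
  intro y hy
  by_contra! hsub
  have hbipartite : G.IsBipartiteWith A B := ⟨Set.disjoint_iff_inter_eq_empty.mpr hdisj, hbip⟩
  have hG : G.CliqueFree 3 := hbipartite.isBipartite.cliqueFree (by norm_num)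
  have hle := G.totalDominationNumber_le_card_sub_degree hG hiso hy.2 (Set.sdiff_eq_empty.mp hsub)
  omega

theorem bipartite_extremal_neighborhood_not_subset
    {V : Type*} [Fintype V] (G : SimpleGraph V) [DecidableRel G.Adj]
    (A B : Set V) (hcov : A ∪ B = Set.univ) (hdisj : A ∩ B = ∅)
    (hbip : ∀ u v : V, G.Adj u v → (u ∈ A ∧ v ∈ B) ∨ (u ∈ B ∧ v ∈ A))
    (hiso : ∀ v : V, ∃ u : V, G.Adj v u)
    (hγ : G.totalDominationNumber = Fintype.card V - G.maxDegree + 1)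
    (x : V) (hx : x ∈ A) (hdeg : G.degree x = G.maxDegree) :
    ∀ y ∈ A \ {x}, (G.neighborSet y \ G.neighborSet x).Nonempty :=
  bipartite_extremal_neighborhood_not_subset_general G A B hdisj hbip hiso hγ x hdeg
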